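/- arXiv:1106.5851 — 7 statements merged into one kernel-verified Lean document; each statement's English description precedes it below -/
import Mathlib

section
/- Let p ≡ 1 (mod 6) be a prime and a ∈ F_p*. Then the trace of Frobenius b = p + 1 - N_{p,a} of the curve y² = x³ + a³ over F_p is not divisible by 6; more precisely b ≡ 2 or 4 (mod 6). -/
/-!
Write `A` for the number of affine points, so that the trace is `p - A`. The involution
`y ↦ -y` of the affine curve fixes exactly the points `(x, 0)` with `x³ = -a³`; there are
three of them because `p ≡ 1 (mod 3)` supplies a primitive cube root of unity, so `A` is odd
and the trace is even. The map `x ↦ ζ x`, for `ζ` a primitive cube root of unity, has order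
`3` and fixes exactly the points `(0, y)` with `y² = a³`, of which there are `0` or `2`; so
`A ≡ 0` or `2 (mod 3)`, and the trace is `≡ 1` or `2 (mod 3)`.
-/

/-- Number of projective points (affine solutions plus the point at infinity)
on the Bachet curve `y² = x³ + a³` over `F_p`. -/
def bachetCount (p : ℕ) [Fact p.Prime] (a : ZMod p) : ℕ :=
  haveI : NeZero p := ⟨(Fact.out : p.Prime).ne_zero⟩
  (Finset.univ.filter (fun P : ZMod p × ZMod p => P.2 ^ 2 = P.1 ^ 3 + a ^ 3)).card + 1

open Finset

theorem Finset.card_modEq_card_filter_apply_eq_self {α : Type*} [DecidableEq α] {q : ℕ}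
    [Fact q.Prime] {s : Finset α} {f : α → α} (hs : Set.MapsTo f s s) (hf : f^[q] = id) :
    #s ≡ #{x ∈ s | f x = x} [MOD q] := by
  let g : Function.End (s : Set α) := hs.restrict f s s
  have hg : g ^ q ^ 1 = 1 := by
    rw [pow_one]
    change g^[q] = id
    rw [hs.iterate_restrict]
    ext x
    simp [hf]
  convert Equiv.Perm.card_fixedPoints_modEq hg using 1
  · simp
  · rw [← Fintype.card_coe]
    refine Fintype.card_congr ((Equiv.subtypeEquivRight (by simp)).trans <|
      (Equiv.subtypeSubtypeEquivSubtypeInter (· ∈ (s : Set α)) (fun x => f x = x)).symm.trans <|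
      Equiv.subtypeEquivRight ?_)
    simp [g, Function.IsFixedPt, Subtype.ext_iff]

section RootsOfUnity

variable {R : Type*} [CommRing R] [IsDomain R] [Fintype R]

theorem IsPrimitiveRoot.card_filter_modEq_card_filter_zero {β : Type*} [Fintype β] {q : ℕ}
    [Fact q.Prime] {ζ : R} (hζ : IsPrimitiveRoot ζ q) (P : R → β → Prop)
    [∀ x b, Decidable (P x b)] (hP : ∀ x b, P (ζ * x) b ↔ P x b) :
    #{v : R × β | P v.1 v.2} ≡ #{b | P 0 b} [MOD q] := by
  classical
  let f : R × β → R × β := fun v => (ζ * v.1, v.2)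
  have hf_iterate (n : ℕ) (v : R × β) : f^[n] v = (ζ ^ n * v.1, v.2) := by
    induction n with
    | zero => simp
    | succ n ih => rw [Function.iterate_succ_apply', ih, pow_succ', mul_assoc]
  have hf_fixed (v : R × β) : f v = v ↔ v.1 = 0 := by
    have hζ1 : ζ ≠ 1 := hζ.ne_one (Fact.out : q.Prime).one_lt
    simp [f, Prod.ext_iff, mul_left_eq_self₀, hζ1]
  have key := Finset.card_modEq_card_filter_apply_eq_self (q := q)
    (s := {v : R × β | P v.1 v.2}) (f := f) (fun v hv => by simpa [f, hP] using hv)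
    (funext fun v => by simp [hf_iterate, hζ.pow_eq_one])
  convert key using 1
  refine card_nbij' (Prod.mk 0) Prod.snd (fun b hb => by simpa [hf_fixed] using hb) ?_
    (fun _ _ => rfl) ?_ <;>
  · rintro ⟨x, b⟩ hv
    obtain ⟨hxb, rfl⟩ : P x b ∧ x = 0 := by simpa [hf_fixed] using hv
    simp [hxb]

open scoped Classical in
theorem IsPrimitiveRoot.card_filter_pow_eq [DecidableEq R] {n : ℕ} (hn : 0 < n) {ζ : R}
    (hζ : IsPrimitiveRoot ζ n) {c : R} (hc : c ≠ 0) :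
    #{x : R | x ^ n = c} = if ∃ α, α ^ n = c then n else 0 := by
  have hroots := hζ.card_nthRoots c
  rw [← Multiset.toFinset_card_of_nodup (hζ.nthRoots_nodup hc)] at hroots
  convert hroots using 2
  ext x
  simp [Polynomial.mem_nthRoots hn]

end RootsOfUnity

theorem FiniteField.exists_isPrimitiveRoot_of_dvd_card_sub_one {F : Type*} [Field F]
    [Fintype F] {q : ℕ} [Fact q.Prime] (hq : q ∣ Fintype.card F - 1) :
    ∃ ζ : F, IsPrimitiveRoot ζ q := by
  classical
  obtain ⟨u, hu⟩ := exists_prime_orderOf_dvd_card (G := Fˣ) q (by rwa [Fintype.card_units])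
  exact ⟨u, IsPrimitiveRoot.coe_units_iff.mpr (hu ▸ IsPrimitiveRoot.orderOf u)⟩

section AffinePoints

variable {R : Type*} [CommRing R] [IsDomain R] [Fintype R] [DecidableEq R]

def bachetAffinePoints (c : R) : Finset (R × R) := {v | v.2 ^ 2 = v.1 ^ 3 + c}

theorem card_bachetAffinePoints_modEq_three {ζ : R} (hζ : IsPrimitiveRoot ζ 3) (c : R) :
    #(bachetAffinePoints c) ≡ #{y : R | y ^ 2 = c} [MOD 3] := by
  have : Fact (Nat.Prime 3) := ⟨Nat.prime_three⟩
  convert hζ.card_filter_modEq_card_filter_zero (fun x y => y ^ 2 = x ^ 3 + c)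
    (fun x y => by rw [mul_pow, hζ.pow_eq_one, one_mul]) using 2
  · rfl
  · simp

theorem card_bachetAffinePoints_modEq_two (hR : ringChar R ≠ 2) (c : R) :
    #(bachetAffinePoints c) ≡ #{x : R | x ^ 3 = -c} [MOD 2] := by
  have : Fact (Nat.Prime 2) := ⟨Nat.prime_two⟩
  have key := (IsPrimitiveRoot.neg_one _ hR).card_filter_modEq_card_filter_zero
    (fun y x => y ^ 2 = x ^ 3 + c) (fun y x => by rw [neg_one_mul, neg_sq])
  have hswap : #(bachetAffinePoints c) = #{v : R × R | v.1 ^ 2 = v.2 ^ 3 + c} :=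
    card_equiv (Equiv.prodComm R R) (by simp [bachetAffinePoints])
  rw [hswap]
  convert key using 2
  ext x
  simp [eq_neg_iff_add_eq_zero, eq_comm (a := (0 : R))]

end AffinePoints

theorem stmt_3 (p : ℕ) [Fact p.Prime] (hp : p % 6 = 1) (a : ZMod p) (ha : a ≠ 0) :
    ¬ (6 : ℤ) ∣ ((p : ℤ) + 1 - (bachetCount p a : ℤ)) ∧
      (((p : ℤ) + 1 - (bachetCount p a : ℤ)) ≡ 2 [ZMOD 6] ∨
        ((p : ℤ) + 1 - (bachetCount p a : ℤ)) ≡ 4 [ZMOD 6]) := by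
  have : Fact (Nat.Prime 3) := ⟨Nat.prime_three⟩
  have hcount : bachetCount p a = #(bachetAffinePoints (a ^ 3)) + 1 := rfl
  obtain ⟨ζ, hζ⟩ : ∃ ζ : ZMod p, IsPrimitiveRoot ζ 3 :=
    FiniteField.exists_isPrimitiveRoot_of_dvd_card_sub_one (by rw [ZMod.card]; omega)
  have hmod2 := card_bachetAffinePoints_modEq_two (by rw [ZMod.ringChar_zmod_n]; omega) (a ^ 3)
  rw [show -a ^ 3 = (-a) ^ 3 by ring,
    hζ.card_filter_pow_eq three_pos (pow_ne_zero 3 (neg_ne_zero.mpr ha)), if_pos ⟨-a, rfl⟩]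
    at hmod2
  have hmod3 := card_bachetAffinePoints_modEq_three hζ (a ^ 3)
  rw [(IsPrimitiveRoot.neg_one p (by omega)).card_filter_pow_eq two_pos (pow_ne_zero 3 ha)]
    at hmod3
  rw [hcount]
  unfold Nat.ModEq at hmod2 hmod3
  split_ifs at hmod3 <;> simp only [Int.ModEq] <;> omega
end

section
/- Let p ≡ 1 (mod 6) be a prime and a ∈ F_p*. Then N_{p,a} ≡ 0 (mod 6) or N_{p,a} ≡ 4 (mod 6), where N_{p,a} is the number of points (with the point at infinity) on y² = x³ + a³ over F_p. -/
open Finset Polynomial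

theorem FiniteField.exists_isPrimitiveRoot_of_prime_dvd {K : Type*} [Field K] [Fintype K]
    {n : ℕ} (hn : n.Prime) (h : n ∣ Fintype.card K - 1) : ∃ ζ : K, IsPrimitiveRoot ζ n := by
  classical
  have := Fact.mk hn
  obtain ⟨u, hu⟩ := exists_prime_orderOf_dvd_card (G := Kˣ) n (by rwa [Fintype.card_units])
  exact ⟨u, IsPrimitiveRoot.coe_units_iff.2 (hu ▸ IsPrimitiveRoot.orderOf u)⟩

theorem Finset.card_filter_prod_eq_sum_fst {α β : Type*} [Fintype α] [Fintype β]
    (P : α → β → Prop) [DecidablePred fun z : α × β => P z.1 z.2] [∀ a, DecidablePred (P a)] :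
    #{z : α × β | P z.1 z.2} = ∑ a, #{b | P a b} := by
  simp only [card_filter, Fintype.sum_prod_type]

theorem Finset.card_filter_prod_eq_sum_snd {α β : Type*} [Fintype α] [Fintype β]
    (P : α → β → Prop) [DecidablePred fun z : α × β => P z.1 z.2] [∀ b, DecidablePred (P · b)] :
    #{z : α × β | P z.1 z.2} = ∑ b, #{a | P a b} := by
  simp only [card_filter, Fintype.sum_prod_type_right]

section RootCounting

variable {R : Type*} [CommRing R] [IsDomain R] [Fintype R] [DecidableEq R]

theorem card_filter_pow_eq_zero {n : ℕ} (hn : n ≠ 0) : #{x : R | x ^ n = 0} = 1 := by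
  simp [pow_eq_zero_iff hn, filter_eq']

namespace IsPrimitiveRoot

variable {n : ℕ} {ζ : R}

theorem card_filter_pow_eq_s4 (hζ : IsPrimitiveRoot ζ n) (hn : 0 < n) {c : R} (hc : c ≠ 0) :
    #{x : R | x ^ n = c} = if ∃ α, α ^ n = c then n else 0 := by
  have : ({x : R | x ^ n = c} : Finset R) = nthRootsFinset n c := by
    ext x
    simp [Polynomial.mem_nthRootsFinset hn]
  rw [this, nthRootsFinset_def, Multiset.toFinset_card_of_nodup (hζ.nthRoots_nodup hc),
    hζ.card_nthRoots]
  congr 1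

theorem card_filter_pow_eq_pow (hζ : IsPrimitiveRoot ζ n) (hn : 0 < n) {b : R} (hb : b ≠ 0) :
    #{x : R | x ^ n = b ^ n} = n := by
  rw [hζ.card_filter_pow_eq_s4 hn (pow_ne_zero n hb), if_pos ⟨b, rfl⟩]

theorem card_filter_pow_eq_zero_or_eq (hζ : IsPrimitiveRoot ζ n) (hn : 0 < n) {c : R}
    (hc : c ≠ 0) : #{x : R | x ^ n = c} = 0 ∨ #{x : R | x ^ n = c} = n := by
  rw [hζ.card_filter_pow_eq_s4 hn hc]
  split_ifs <;> simp

theorem card_filter_pow_eq_modEq (hζ : IsPrimitiveRoot ζ n) (hn : 0 < n) (c : R) :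
    #{x : R | x ^ n = c} ≡ if c = 0 then 1 else 0 [MOD n] := by
  split_ifs with hc
  · rw [hc, card_filter_pow_eq_zero hn.ne']
  · rcases hζ.card_filter_pow_eq_zero_or_eq hn hc with h | h <;> rw [h]
    exact Nat.modEq_zero_iff_dvd.2 dvd_rfl

theorem sum_card_filter_pow_eq_modEq {ι : Type*} (hζ : IsPrimitiveRoot ζ n) (hn : 0 < n)
    (s : Finset ι) (g : ι → R) :
    ∑ i ∈ s, #{x : R | x ^ n = g i} ≡ #{i ∈ s | g i = 0} [MOD n] := by
  rw [card_filter]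
  exact Nat.ModEq.sum fun i _ => hζ.card_filter_pow_eq_modEq hn (g i)

end IsPrimitiveRoot

end RootCounting

theorem stmt_4 (p : ℕ) [Fact p.Prime] (hp : p % 6 = 1) (a : ZMod p) (ha : a ≠ 0) :
    bachetCount p a % 6 = 0 ∨ bachetCount p a % 6 = 4 := by
  obtain ⟨ω, hω⟩ : ∃ ω : ZMod p, IsPrimitiveRoot ω 3 :=
    FiniteField.exists_isPrimitiveRoot_of_prime_dvd Nat.prime_three (by rw [ZMod.card]; omega)
  have hneg : IsPrimitiveRoot (-1 : ZMod p) 2 := .neg_one p (by omega)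
  have hodd : #{P : ZMod p × ZMod p | P.2 ^ 2 = P.1 ^ 3 + a ^ 3} ≡ 3 [MOD 2] := calc
    _ = ∑ x : ZMod p, #{y : ZMod p | y ^ 2 = x ^ 3 + a ^ 3} :=
      card_filter_prod_eq_sum_fst fun x y : ZMod p => y ^ 2 = x ^ 3 + a ^ 3
    _ ≡ #{x ∈ univ | x ^ 3 + a ^ 3 = 0} [MOD 2] :=
      hneg.sum_card_filter_pow_eq_modEq two_pos univ fun x => x ^ 3 + a ^ 3
    _ = #{x : ZMod p | x ^ 3 = (-a) ^ 3} := by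
      congr 1
      refine filter_congr fun x _ => ?_
      rw [Odd.neg_pow (by decide), eq_neg_iff_add_eq_zero]
    _ = 3 := hω.card_filter_pow_eq_pow three_pos (neg_ne_zero.2 ha)
  have hmod3 : #{P : ZMod p × ZMod p | P.2 ^ 2 = P.1 ^ 3 + a ^ 3} ≡
      #{y : ZMod p | y ^ 2 = a ^ 3} [MOD 3] := calc
    _ = ∑ y : ZMod p, #{x : ZMod p | y ^ 2 = x ^ 3 + a ^ 3} :=
      card_filter_prod_eq_sum_snd fun x y : ZMod p => y ^ 2 = x ^ 3 + a ^ 3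
    _ = ∑ y : ZMod p, #{x : ZMod p | x ^ 3 = y ^ 2 - a ^ 3} := by
      simp only [eq_sub_iff_add_eq, eq_comm]
    _ ≡ #{y ∈ univ | y ^ 2 - a ^ 3 = 0} [MOD 3] :=
      hω.sum_card_filter_pow_eq_modEq three_pos univ fun y => y ^ 2 - a ^ 3
    _ = #{y : ZMod p | y ^ 2 = a ^ 3} := by simp only [sub_eq_zero]
  have hsqrt := hneg.card_filter_pow_eq_zero_or_eq two_pos (pow_ne_zero 3 ha)
  unfold bachetCount Nat.ModEq at *
  omega
end

section
/- Let p ≡ 1 (mod 6) be a prime and let χ denote the quadratic character (Legendre symbol) on F_p with χ(0) = 0. Then the sum over all x ∈ F_p of χ(x³ + 1), taken as an integer, is congruent to 4 modulo 6. -/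
open Finset

theorem stmt_8 (p : ℕ) [Fact p.Prime] (hp : p % 6 = 1) :
    haveI : NeZero p := ⟨(Fact.out : p.Prime).ne_zero⟩
    (∑ x : ZMod p, quadraticChar (ZMod p) (x ^ 3 + 1)) ≡ 4 [ZMOD 6] := by
  haveI : NeZero p := ⟨(Fact.out : p.Prime).ne_zero⟩
  show (∑ x : ZMod p, quadraticChar (ZMod p) (x ^ 3 + 1)) ≡ 4 [ZMOD 6]
  have hp2 := (Fact.out : p.Prime).two_le
  have hp7 : 7 ≤ p := by omega
  -- get a primitive cube root of unity ω
  haveI : Fact (Nat.Prime 3) := ⟨by norm_num⟩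
  have h3dvd : 3 ∣ Fintype.card (ZMod p)ˣ := by
    rw [ZMod.card_units]; omega
  obtain ⟨u, hu⟩ := exists_prime_orderOf_dvd_card 3 h3dvd
  set ω : ZMod p := (u : ZMod p) with hωdef
  have hω0 : ω ≠ 0 := u.ne_zero
  have hω3 : ω ^ 3 = 1 := by
    have h : u ^ 3 = 1 := by rw [← hu]; exact pow_orderOf_eq_one u
    rw [hωdef, ← Units.val_pow_eq_pow_val, h, Units.val_one]
  have hω1 : ω ≠ 1 := by
    intro h
    have : u = 1 := Units.ext h
    rw [this, orderOf_one] at hu; norm_num at hu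
  have hω2 : ω ^ 2 ≠ 1 := by
    intro h
    apply hω1
    have h3 := hω3
    rw [pow_succ, h, one_mul] at h3
    exact h3
  have hωω2 : ω ≠ ω ^ 2 := by
    intro h
    apply hω1
    have : (1 : ZMod p) * ω = ω * ω := by rw [one_mul]; nth_rewrite 1 [h]; ring
    exact (mul_right_cancel₀ hω0 this).symm
  have hsum : ω ^ 2 + ω + 1 = 0 := by
    have key : (ω - 1) * (ω ^ 2 + ω + 1) = 0 := by linear_combination hω3
    rcases mul_eq_zero.mp key with h | h
    · exact absurd (sub_eq_zero.mp h) hω1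
    · exact h
  -- cube roots of unity
  have htriple : ∀ t : ZMod p, t ^ 3 = 1 → t = 1 ∨ t = ω ∨ t = ω ^ 2 := by
    intro t ht
    have key : (t - 1) * ((t - ω) * (t - ω ^ 2)) = 0 := by
      linear_combination ht + (-t ^ 2 + t) * hsum + (t - 1) * hω3
    rcases mul_eq_zero.mp key with h | h
    · exact Or.inl (sub_eq_zero.mp h)
    rcases mul_eq_zero.mp h with h | h
    · exact Or.inr (Or.inl (sub_eq_zero.mp h))
    · exact Or.inr (Or.inr (sub_eq_zero.mp h))
  -- fibers of cubing over nonzero values have exactly 3 elements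
  have hfiber : ∀ y x₀ : ZMod p, x₀ ≠ 0 → x₀ ^ 3 = y →
      (univ.filter fun x : ZMod p => x ^ 3 = y) = {x₀, ω * x₀, ω ^ 2 * x₀} := by
    intro y x₀ hx0 hxy
    have hy0 : y ≠ 0 := hxy ▸ pow_ne_zero 3 hx0
    ext z
    simp only [mem_filter, mem_univ, true_and, mem_insert, mem_singleton]
    constructor
    · intro hz
      have ht : (z * x₀⁻¹) ^ 3 = 1 := by
        rw [mul_pow, hz, inv_pow, hxy, mul_inv_cancel₀ hy0]
      rcases htriple _ ht with h | h | h
      · left; exact (mul_inv_eq_one₀ hx0).mp h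
      · right; left
        rw [← div_eq_mul_inv] at h
        exact (div_eq_iff hx0).mp h
      · right; right
        rw [← div_eq_mul_inv] at h
        exact (div_eq_iff hx0).mp h
    · rintro (rfl | rfl | rfl)
      · exact hxy
      · linear_combination ω ^ 3 * hxy + y * hω3
      · linear_combination ω ^ 6 * hxy + y * (ω ^ 3 + 1) * hω3
  have hcard3 : ∀ y x₀ : ZMod p, x₀ ≠ 0 → x₀ ^ 3 = y →
      (univ.filter fun x : ZMod p => x ^ 3 = y).card = 3 := by
    intro y x₀ hx0 hxy
    refine Finset.card_eq_three.mpr ⟨x₀, ω * x₀, ω ^ 2 * x₀, ?_, ?_, ?_, hfiber y x₀ hx0 hxy⟩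
    · intro h
      apply hω1
      have : (1 : ZMod p) * x₀ = ω * x₀ := by rw [one_mul]; exact h
      exact (mul_right_cancel₀ hx0 this).symm
    · intro h
      apply hω2
      have : (1 : ZMod p) * x₀ = ω ^ 2 * x₀ := by rw [one_mul]; exact h
      exact (mul_right_cancel₀ hx0 this).symm
    · intro h
      exact hωω2 (mul_right_cancel₀ hx0 h)
  set S : ℤ := ∑ x : ZMod p, quadraticChar (ZMod p) (x ^ 3 + 1) with hS
  -- mod 3
  have h3 : ((S : ℤ) : ZMod 3) = ((4 : ℤ) : ZMod 3) := by
    have hpush : ((S : ℤ) : ZMod 3)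
        = ∑ x : ZMod p, (fun y : ZMod p =>
            ((quadraticChar (ZMod p) (y + 1) : ℤ) : ZMod 3)) (x ^ 3) := by
      rw [hS]; push_cast; rfl
    rw [hpush, Finset.sum_comp (fun y : ZMod p =>
        ((quadraticChar (ZMod p) (y + 1) : ℤ) : ZMod 3)) (fun x : ZMod p => x ^ 3)]
    have h0mem : (0 : ZMod p) ∈ univ.image (fun x : ZMod p => x ^ 3) :=
      Finset.mem_image.mpr ⟨0, Finset.mem_univ _, by ring⟩
    rw [← Finset.add_sum_erase _ _ h0mem]
    have hrest : ∑ b ∈ (univ.image (fun x : ZMod p => x ^ 3)).erase 0,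
        (univ.filter fun x : ZMod p => x ^ 3 = b).card •
          ((quadraticChar (ZMod p) (b + 1) : ℤ) : ZMod 3) = 0 := by
      apply Finset.sum_eq_zero
      intro b hb
      have hb0 : b ≠ 0 := Finset.ne_of_mem_erase hb
      obtain ⟨x₀, -, hx₀⟩ := Finset.mem_image.mp (Finset.mem_of_mem_erase hb)
      have hx00 : x₀ ≠ 0 := by
        intro h; apply hb0; rw [← hx₀, h]; ring
      have h30 : ((3 : ℕ) : ZMod 3) = 0 := by rfl
      rw [hcard3 b x₀ hx00 hx₀, nsmul_eq_mul, h30, zero_mul]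
    rw [hrest, add_zero]
    have hfilt0 : (univ.filter fun x : ZMod p => x ^ 3 = (0 : ZMod p)) = {0} := by
      ext z
      simp [pow_eq_zero_iff]
    rw [hfilt0, Finset.card_singleton, one_smul, zero_add,
      (quadraticChar (ZMod p)).map_one]
    show ((1 : ℤ) : ZMod 3) = ((4 : ℤ) : ZMod 3)
    rfl
  -- mod 2
  have h2 : ((S : ℤ) : ZMod 2) = ((4 : ℤ) : ZMod 2) := by
    have hpush : ((S : ℤ) : ZMod 2)
        = ∑ x : ZMod p, ((quadraticChar (ZMod p) (x ^ 3 + 1) : ℤ) : ZMod 2) := by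
      rw [hS]; push_cast; rfl
    have hterm : ∀ x : ZMod p, ((quadraticChar (ZMod p) (x ^ 3 + 1) : ℤ) : ZMod 2)
        = if x ^ 3 = -1 then 0 else 1 := by
      intro x
      by_cases h : x ^ 3 + 1 = 0
      · have hx : x ^ 3 = -1 := by linear_combination h
        rw [if_pos hx, h]
        simp
      · have hx : ¬ x ^ 3 = -1 := by
          intro hc; exact h (by rw [hc]; ring)
        rcases quadraticChar_dichotomy h with h1 | h1 <;> rw [h1, if_neg hx] <;> decide
    rw [hpush]
    simp only [hterm]
    rw [Finset.sum_ite]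
    simp only [Finset.sum_const, smul_zero, zero_add, nsmul_eq_mul, mul_one]
    have hc3 : (univ.filter fun x : ZMod p => x ^ 3 = (-1 : ZMod p)).card = 3 := by
      apply hcard3 (-1) (-1)
      · intro h
        have : (1 : ZMod p) = 0 := by linear_combination -h
        simp at this
      · ring
    have htot := Finset.card_filter_add_card_filter_not
      (s := (univ : Finset (ZMod p))) (p := fun x : ZMod p => x ^ 3 = -1)
    rw [Finset.card_univ, ZMod.card] at htot
    have hcard : (univ.filter fun x : ZMod p => ¬ x ^ 3 = -1).card = p - 3 := by omega
    rw [hcard]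
    have : (2 : ℕ) ∣ p - 3 := by omega
    obtain ⟨k, hk⟩ := this
    rw [hk, Nat.cast_mul, ZMod.natCast_self, zero_mul]
    decide
  have m2 := (ZMod.intCast_eq_intCast_iff _ _ _).mp h2
  have m3 := (ZMod.intCast_eq_intCast_iff _ _ _).mp h3
  simp only [Int.ModEq] at m2 m3 ⊢
  omega
end

section
/- Let p ≡ 1 (mod 6) be a prime and a ∈ F_p*. Then a is a quadratic residue modulo p if and only if N_{p,a} ≡ 0 (mod 6), where N_{p,a} is the number of projective points on y² = x³ + a³ over F_p. -/
/-!
The cube roots of unity act on the affine solutions of `y² = x³ + b` by `(x, y) ↦ (ωx, y)`, and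
`(x, y) ↦ (x, -y)` is an involution on them. A map of prime order `ℓ` on a finite set has as many
fixed points as the set has elements, modulo `ℓ`. Hence the number of solutions is congruent to
`#{y : y² = b}` modulo 3 and to `#{x : x³ = -b}` modulo 2. For `b = a³` the latter count is 3, so
`N_{p,a}` is even, and the former is `2` or `0` according as `a³`, equivalently `a`, is a square
or not, so `3 ∣ N_{p,a}` exactly when `a` is a square.
-/

open Function

theorem exists_isPrimitiveRoot_of_prime_dvd_card_units {M : Type*} [CommMonoid M] [Finite M]
    {q : ℕ} (hq : q.Prime) (h : q ∣ Nat.card Mˣ) : ∃ ζ : M, IsPrimitiveRoot ζ q := by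
  have : Fact q.Prime := ⟨hq⟩
  obtain ⟨ζ, hζ⟩ := exists_prime_orderOf_dvd_card' q h
  exact ⟨ζ, IsPrimitiveRoot.coe_units_iff.mpr (IsPrimitiveRoot.iff_orderOf.mpr hζ)⟩

theorem IsPrimitiveRoot.natCard_pow_eq_pow {F : Type*} [Field F] [Finite F] {ω : F} {n : ℕ}
    [NeZero n] (hω : IsPrimitiveRoot ω n) {c : F} (hc : c ≠ 0) :
    Nat.card {x : F // x ^ n = c ^ n} = n := by
  classical
  have : Fintype F := Fintype.ofFinite F
  have hcn : c ^ n ≠ 0 := pow_ne_zero n hc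
  rw [← Nat.card_congr (Equiv.subtypeEquivRight fun x =>
    Polynomial.mem_nthRootsFinset (Nat.pos_of_neZero n) (c ^ n)),
    Nat.card_eq_fintype_card, Fintype.card_coe, Polynomial.nthRootsFinset_def,
    Multiset.toFinset_card_of_nodup (hω.nthRoots_nodup hcn), hω.card_nthRoots, if_pos ⟨c, rfl⟩]

theorem quadraticChar_card_sqrts_cube {F : Type*} [Field F] [Fintype F] [DecidableEq F]
    (hF : ringChar F ≠ 2) (a : F) :
    (Nat.card {y : F // y ^ 2 = a ^ 3} : ℤ) = quadraticChar F a + 1 := by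
  have hχ : quadraticChar F (a ^ 3) = quadraticChar F a := by
    rcases eq_or_ne a 0 with rfl | ha
    · simp
    rw [map_pow, pow_succ, quadraticChar_sq_one ha, one_mul]
  rw [← hχ, ← quadraticChar_card_sqrts hF, ← Nat.card_eq_card_toFinset]
  rfl

section MordellCurve

variable {F : Type*} [Field F]

def mordellSolutions (b : F) : Set (F × F) := {P | P.2 ^ 2 = P.1 ^ 3 + b}

theorem mem_mordellSolutions {b : F} {P : F × F} :
    P ∈ mordellSolutions b ↔ P.2 ^ 2 = P.1 ^ 3 + b :=
  Iff.rfl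

def mordellRotate {ω : F} (hω : ω ^ 3 = 1) (b : F) : mordellSolutions b → mordellSolutions b :=
  fun P => ⟨(ω * P.1.1, P.1.2), by
    rw [mem_mordellSolutions, mul_pow, hω, one_mul]; exact P.2⟩

def mordellNeg (b : F) : mordellSolutions b → mordellSolutions b :=
  fun P => ⟨(P.1.1, -P.1.2), by rw [mem_mordellSolutions, neg_sq]; exact P.2⟩

theorem mordellRotate_iterate_three {ω : F} (hω : ω ^ 3 = 1) (b : F) :
    (mordellRotate hω b)^[3] = id := by
  funext P
  apply Subtype.ext
  change ((ω * (ω * (ω * P.1.1)), P.1.2) : F × F) = P.1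
  rw [← mul_assoc, ← mul_assoc, ← pow_three', hω, one_mul]

theorem mordellNeg_iterate_two (b : F) : (mordellNeg b)^[2] = id := by
  funext P
  apply Subtype.ext
  change ((P.1.1, - -P.1.2) : F × F) = P.1
  rw [neg_neg]

theorem isFixedPt_mordellRotate_iff {ω : F} (hω : IsPrimitiveRoot ω 3) {b : F}
    {P : mordellSolutions b} : IsFixedPt (mordellRotate hω.pow_eq_one b) P ↔ P.1.1 = 0 := by
  have hω1 : ω - 1 ≠ 0 := sub_ne_zero.mpr (hω.ne_one (by norm_num))
  rw [IsFixedPt, Subtype.ext_iff, Prod.ext_iff]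
  change ω * P.1.1 = P.1.1 ∧ P.1.2 = P.1.2 ↔ _
  rw [and_iff_left rfl, ← sub_eq_zero, ← sub_one_mul, mul_eq_zero, or_iff_right hω1]

theorem isFixedPt_mordellNeg_iff (h2 : (2 : F) ≠ 0) {b : F} {P : mordellSolutions b} :
    IsFixedPt (mordellNeg b) P ↔ P.1.2 = 0 := by
  rw [IsFixedPt, Subtype.ext_iff, Prod.ext_iff]
  change P.1.1 = P.1.1 ∧ -P.1.2 = P.1.2 ↔ _
  rw [and_iff_right rfl, neg_eq_iff_add_eq_zero, ← two_mul, mul_eq_zero, or_iff_right h2]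

def fixedPointsMordellRotateEquiv {ω : F} (hω : IsPrimitiveRoot ω 3) (b : F) :
    fixedPoints (mordellRotate hω.pow_eq_one b) ≃ {y : F // y ^ 2 = b} where
  toFun P := ⟨P.1.1.2, by
    have := P.1.2
    rwa [mem_mordellSolutions, (isFixedPt_mordellRotate_iff hω).mp P.2, zero_pow three_ne_zero,
      zero_add] at this⟩
  invFun y := ⟨⟨(0, y.1), by
    rw [mem_mordellSolutions, zero_pow three_ne_zero, zero_add]; exact y.2⟩,
    (isFixedPt_mordellRotate_iff hω).mpr rfl⟩
  left_inv P := by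
    ext
    · exact ((isFixedPt_mordellRotate_iff hω).mp P.2).symm
    · rfl
  right_inv y := rfl

def fixedPointsMordellNegEquiv (h2 : (2 : F) ≠ 0) (b : F) :
    fixedPoints (mordellNeg b) ≃ {x : F // x ^ 3 = -b} where
  toFun P := ⟨P.1.1.1, by
    have := P.1.2
    rw [mem_mordellSolutions, (isFixedPt_mordellNeg_iff h2).mp P.2, zero_pow two_ne_zero] at this
    exact eq_neg_of_add_eq_zero_left this.symm⟩
  invFun x := ⟨⟨(x.1, 0), by
    rw [mem_mordellSolutions, zero_pow two_ne_zero, x.2, neg_add_cancel]⟩,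
    (isFixedPt_mordellNeg_iff h2).mpr rfl⟩
  left_inv P := by
    ext
    · rfl
    · exact ((isFixedPt_mordellNeg_iff h2).mp P.2).symm
  right_inv x := rfl

variable [Finite F]

theorem natCard_mordellSolutions_modEq_sqrts {ω : F} (hω : IsPrimitiveRoot ω 3) (b : F) :
    Nat.card (mordellSolutions b) ≡ Nat.card {y : F // y ^ 2 = b} [MOD 3] := by
  classical
  have : Fintype F := Fintype.ofFinite F
  have : Fact (Nat.Prime 3) := ⟨Nat.prime_three⟩
  rw [← Nat.card_congr (fixedPointsMordellRotateEquiv hω b), Nat.card_eq_fintype_card,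
    Nat.card_eq_fintype_card]
  exact Equiv.Perm.card_fixedPoints_modEq (f := mordellRotate _ b) (n := 1)
    (mordellRotate_iterate_three _ b)

theorem natCard_mordellSolutions_modEq_cbrts (h2 : (2 : F) ≠ 0) (b : F) :
    Nat.card (mordellSolutions b) ≡ Nat.card {x : F // x ^ 3 = -b} [MOD 2] := by
  classical
  have : Fintype F := Fintype.ofFinite F
  have : Fact (Nat.Prime 2) := ⟨Nat.prime_two⟩
  rw [← Nat.card_congr (fixedPointsMordellNegEquiv h2 b), Nat.card_eq_fintype_card,
    Nat.card_eq_fintype_card]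
  exact Equiv.Perm.card_fixedPoints_modEq (f := mordellNeg b) (n := 1) (mordellNeg_iterate_two b)

theorem odd_natCard_mordellSolutions_cube {ω : F} (hω : IsPrimitiveRoot ω 3) (h2 : (2 : F) ≠ 0)
    {c : F} (hc : c ≠ 0) : Odd (Nat.card (mordellSolutions (c ^ 3))) := by
  have hcube : Nat.card {x : F // x ^ 3 = -c ^ 3} = 3 := by
    rw [← Odd.neg_pow (by decide)]
    exact hω.natCard_pow_eq_pow (neg_ne_zero.mpr hc)
  have := natCard_mordellSolutions_modEq_cbrts h2 (c ^ 3)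
  rw [hcube] at this
  exact Nat.odd_iff.mpr this

end MordellCurve

section FiniteField

variable {F : Type*} [Field F] [Fintype F] [DecidableEq F]

theorem natCard_mordellSolutions_cube_modEq {ω : F} (hω : IsPrimitiveRoot ω 3)
    (hF : ringChar F ≠ 2) (a : F) :
    (Nat.card (mordellSolutions (a ^ 3)) : ℤ) ≡ quadraticChar F a + 1 [ZMOD 3] := by
  rw [← quadraticChar_card_sqrts_cube hF]
  exact Int.natCast_modEq_iff.mpr (natCard_mordellSolutions_modEq_sqrts hω (a ^ 3))

theorem isSquare_iff_natCard_mordellSolutions_cube {ω : F} (hω : IsPrimitiveRoot ω 3)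
    (hF : ringChar F ≠ 2) {a : F} (ha : a ≠ 0) :
    IsSquare a ↔ (Nat.card (mordellSolutions (a ^ 3)) + 1) % 6 = 0 := by
  have hodd := Nat.odd_iff.mp (odd_natCard_mordellSolutions_cube hω (Ring.two_ne_zero hF) ha)
  have hmod := natCard_mordellSolutions_cube_modEq hω hF a
  rw [Int.ModEq] at hmod
  rw [← quadraticChar_one_iff_isSquare ha]
  rcases quadraticChar_dichotomy ha with h | h <;> rw [h] at hmod ⊢ <;> omega

end FiniteField

theorem bachetCount_eq (p : ℕ) [Fact p.Prime] (a : ZMod p) :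
    bachetCount p a = Nat.card (mordellSolutions (a ^ 3)) + 1 := by
  rw [bachetCount, ← Fintype.card_subtype, ← Nat.card_eq_fintype_card]
  rfl

theorem stmt_11 (p : ℕ) [Fact p.Prime] (hp : p % 6 = 1) (a : ZMod p) (ha : a ≠ 0) :
    IsSquare a ↔ bachetCount p a % 6 = 0 := by
  obtain ⟨ω, hω⟩ := exists_isPrimitiveRoot_of_prime_dvd_card_units (M := ZMod p) Nat.prime_three
    (by rw [Nat.card_eq_fintype_card, ZMod.card_units]; omega)
  have hp2 : ringChar (ZMod p) ≠ 2 := by rw [ZMod.ringChar_zmod_n]; omega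
  rw [bachetCount_eq, isSquare_iff_natCard_mordellSolutions_cube hω hp2 ha]
end

section
/- Let p ≡ 1 (mod 6) be a prime and a ∈ F_p*. Then a is a quadratic non-residue modulo p if and only if N_{p,a} ≡ 4 (mod 6), where N_{p,a} is the number of projective points on y² = x³ + a³ over F_p. -/
open Finset

theorem card_filter_modEq_card_filter_fixed {α : Type*} [Fintype α] [DecidableEq α]
    {q : ℕ} [Fact q.Prime] (f : α → α) (hf : f^[q] = id) (P : α → Prop) [DecidablePred P]
    (hP : ∀ x, P x → P (f x)) :
    #{x | P x} ≡ #{x | P x ∧ f x = x} [MOD q] := by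
  let g : Function.End {x // P x} := Subtype.map f hP
  have hg : g ^ q ^ 1 = 1 := by
    have hval : Function.Semiconj Subtype.val g f := fun _ => rfl
    rw [pow_one]
    funext x
    exact Subtype.ext ((hval.iterate_right q x).trans (congrFun hf x))
  have hfix : Fintype.card (Function.fixedPoints g) = #{x | P x ∧ f x = x} := by
    rw [← Fintype.card_subtype]
    exact Fintype.card_congr ((Equiv.subtypeEquivRight fun y => Subtype.ext_iff).trans
      (Equiv.subtypeSubtypeEquivSubtypeInter P (fun x => f x = x)))
  rw [← hfix, ← Fintype.card_subtype]
  exact Equiv.Perm.card_fixedPoints_modEq hg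

section FiniteField

variable {F : Type*} [Field F] [Fintype F] [DecidableEq F]

theorem card_curve_modEq_card_cubeRoots (hF : ringChar F ≠ 2) (c : F) :
    #{P : F × F | P.2 ^ 2 = P.1 ^ 3 + c} ≡ #{x : F | x ^ 3 + c = 0} [MOD 2] := by
  have key := card_filter_modEq_card_filter_fixed (q := 2) (fun P : F × F => (P.1, -P.2))
    (by funext P; simp) (fun P => P.2 ^ 2 = P.1 ^ 3 + c) (fun P hP => by simpa using hP)
  have hfix : ({P : F × F | P.2 ^ 2 = P.1 ^ 3 + c ∧ (P.1, -P.2) = P} : Finset (F × F)) =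
      ({x : F | x ^ 3 + c = 0} : Finset F).image (·, 0) := by
    ext ⟨x, y⟩
    simp only [mem_filter, mem_univ, true_and, mem_image, Prod.mk.injEq,
      Ring.eq_self_iff_eq_zero_of_char_ne_two hF]
    constructor
    · rintro ⟨h, rfl⟩
      exact ⟨x, by linear_combination -h, rfl, rfl⟩
    · rintro ⟨x, hx, rfl, rfl⟩
      exact ⟨by linear_combination -hx, rfl⟩
  rwa [hfix, card_image_of_injective _ (Prod.mk_left_injective 0)] at key

theorem card_cubeRoots_modEq_one (h3 : (3 : F) ≠ 0) {a : F} (ha : a ≠ 0) :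
    #{x : F | x ^ 3 + a ^ 3 = 0} ≡ 1 [MOD 2] := by
  have h3a : 3 * a ^ 2 ≠ 0 := mul_ne_zero h3 (pow_ne_zero 2 ha)
  have key := card_filter_modEq_card_filter_fixed (q := 2) (fun x : F => a - x)
    (by funext x; simp) (fun x => x ^ 2 - a * x + a ^ 2 = 0) (fun x hx => by linear_combination hx)
  have hfix : ({x : F | x ^ 2 - a * x + a ^ 2 = 0 ∧ a - x = x} : Finset F) = ∅ :=
    filter_eq_empty_iff.mpr fun x _ ⟨hquad, hmid⟩ =>
      h3a (by linear_combination 4 * hquad - (a - 2 * x) * hmid)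
  have hsplit : ({x : F | x ^ 3 + a ^ 3 = 0} : Finset F) =
      insert (-a) ({x : F | x ^ 2 - a * x + a ^ 2 = 0} : Finset F) := by
    ext x
    simp only [mem_filter, mem_univ, true_and, mem_insert]
    rw [show x ^ 3 + a ^ 3 = (x - -a) * (x ^ 2 - a * x + a ^ 2) by ring, mul_eq_zero, sub_eq_zero]
  have hnotMem : -a ∉ ({x : F | x ^ 2 - a * x + a ^ 2 = 0} : Finset F) := by
    simp only [mem_filter, mem_univ, true_and]
    exact fun h => h3a (by linear_combination h)
  rw [hfix, card_empty] at key
  rw [hsplit, card_insert_of_notMem hnotMem]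
  exact key.add_right 1

theorem card_curve_modEq_card_sqrts {ζ : F} (hζ : IsPrimitiveRoot ζ 3) (c : F) :
    #{P : F × F | P.2 ^ 2 = P.1 ^ 3 + c} ≡ #{y : F | y ^ 2 = c} [MOD 3] := by
  have key := card_filter_modEq_card_filter_fixed (q := 3) (fun P : F × F => (ζ * P.1, P.2))
    (by
      funext P
      show (ζ * (ζ * (ζ * P.1)), P.2) = P
      exact Prod.ext (by linear_combination P.1 * hζ.pow_eq_one) rfl)
    (fun P => P.2 ^ 2 = P.1 ^ 3 + c)
    (fun P hP => by linear_combination hP - P.1 ^ 3 * hζ.pow_eq_one)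
  have hfix : ({P : F × F | P.2 ^ 2 = P.1 ^ 3 + c ∧ (ζ * P.1, P.2) = P} : Finset (F × F)) =
      ({y : F | y ^ 2 = c} : Finset F).image (0, ·) := by
    ext ⟨x, y⟩
    simp only [mem_filter, mem_univ, true_and, mem_image, Prod.mk.injEq, and_true,
      mul_left_eq_self₀, hζ.ne_one (by norm_num), false_or]
    constructor
    · rintro ⟨h, rfl⟩
      exact ⟨y, by linear_combination h, rfl, rfl⟩
    · rintro ⟨y, hy, rfl, rfl⟩
      exact ⟨by linear_combination hy, rfl⟩
  rwa [hfix, card_image_of_injective _ (Prod.mk_right_injective 0)] at key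

theorem card_sqrts_cube (hF : ringChar F ≠ 2) {a : F} (ha : a ≠ 0) :
    #{y : F | y ^ 2 = a ^ 3} = if IsSquare a then 2 else 0 := by
  have h := quadraticChar_card_sqrts hF (a ^ 3)
  rw [Set.toFinset_ofPred, map_pow] at h
  split_ifs with hsq
  · rw [(quadraticChar_one_iff_isSquare ha).mpr hsq] at h
    exact_mod_cast h
  · rw [quadraticChar_neg_one_iff_not_isSquare.mpr hsq] at h
    exact_mod_cast h.trans (by norm_num : ((-1 : ℤ) ^ 3 + 1 = 0))

end FiniteField

theorem stmt_12 (p : ℕ) [Fact p.Prime] (hp : p % 6 = 1) (a : ZMod p) (ha : a ≠ 0) :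
    ¬ IsSquare a ↔ bachetCount p a % 6 = 4 := by
  have hp1 : 1 < p := (Fact.out : p.Prime).one_lt
  have h2 : ringChar (ZMod p) ≠ 2 := by rw [ZMod.ringChar_zmod_n]; omega
  have h3 : (3 : ZMod p) ≠ 0 := fun h => by
    have := Nat.le_of_dvd (by norm_num) ((ZMod.natCast_eq_zero_iff 3 p).mp (mod_cast h))
    omega
  obtain ⟨u, hu⟩ := exists_prime_orderOf_dvd_card (G := (ZMod p)ˣ) 3
    (by rw [ZMod.card_units]; omega)
  have hζ : IsPrimitiveRoot (u : ZMod p) 3 :=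
    IsPrimitiveRoot.coe_units_iff.mpr (hu ▸ IsPrimitiveRoot.orderOf u)
  have hodd := (card_curve_modEq_card_cubeRoots h2 (a ^ 3)).trans (card_cubeRoots_modEq_one h3 ha)
  have hmod3 := card_curve_modEq_card_sqrts hζ (a ^ 3)
  rw [card_sqrts_cube h2 ha] at hmod3
  unfold bachetCount
  unfold Nat.ModEq at hodd hmod3
  split_ifs at hmod3 with hsq <;> simp only [hsq, not_true_eq_false, not_false_eq_true,
    false_iff, true_iff] <;> omega
end

section
/- Let p ≡ 1 (mod 6) be a prime, a ∈ F_p* a quadratic residue, and b = p + 1 - N_{p,a} the trace of Frobenius of the curve y² = x³ + a³ over F_p. Then b ≡ 2 (mod 6). -/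
theorem stmt_13 (p : ℕ) [Fact p.Prime] (hp : p % 6 = 1) (a : ZMod p) (ha : a ≠ 0)
    (hsq : IsSquare a) :
    ((p : ℤ) + 1 - (bachetCount p a : ℤ)) ≡ 2 [ZMOD 6] := by
  haveI : NeZero p := ⟨(Fact.out : p.Prime).ne_zero⟩
  have hp' : p.Prime := Fact.out
  have hple := hp'.two_le
  -- 2 ≠ 0 in ZMod p
  have h2 : (2 : ZMod p) ≠ 0 := by
    intro h
    have h2' : ((2 : ℕ) : ZMod p) = 0 := by exact_mod_cast h
    have := (ZMod.natCast_eq_zero_iff 2 p).mp h2'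
    have := (Nat.prime_dvd_prime_iff_eq hp' Nat.prime_two).mp this
    omega
  -- primitive cube root of unity
  haveI : Fact (Nat.Prime 3) := ⟨by norm_num⟩
  have h3dvd : 3 ∣ Fintype.card (ZMod p)ˣ := by
    rw [ZMod.card_units_eq_totient, Nat.totient_prime hp']
    omega
  obtain ⟨g, hg⟩ := exists_prime_orderOf_dvd_card 3 h3dvd
  set ζ : ZMod p := (g : ZMod p) with hζdef
  have hζ3 : ζ ^ 3 = 1 := by
    have : g ^ 3 = 1 := by rw [← hg]; exact pow_orderOf_eq_one g
    have := congrArg (Units.val) this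
    push_cast at this
    exact this
  have hζ1 : ζ ≠ 1 := by
    intro h
    have : g = 1 := Units.ext h
    rw [this, orderOf_one] at hg
    omega
  have hζ0 : ζ ≠ 0 := by
    intro h
    rw [h] at hζ3
    simp at hζ3
  have hζ2 : ζ ^ 2 ≠ 1 := by
    intro h
    apply hζ1
    have : ζ ^ 3 = ζ ^ 2 * ζ := by ring
    rw [hζ3, h, one_mul] at this
    exact this.symm
  have hs : ζ ^ 2 + ζ + 1 = 0 := by
    have hfac : (ζ - 1) * (ζ ^ 2 + ζ + 1) = 0 := by linear_combination hζ3
    rcases mul_eq_zero.mp hfac with h | h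
    · exact absurd (by linear_combination h) hζ1
    · exact h
  -- cube roots
  have hcube : ∀ x c : ZMod p, x ^ 3 = c ^ 3 ↔ (x = c ∨ x = ζ * c ∨ x = ζ ^ 2 * c) := by
    intro x c
    constructor
    · intro h
      have hfac : (x - c) * (x - ζ * c) * (x - ζ ^ 2 * c) = 0 := by
        linear_combination h + (-c * x ^ 2 + c ^ 2 * x) * hs + (c ^ 2 * x - c ^ 3) * hζ3
      rcases mul_eq_zero.mp hfac with h' | h'
      · rcases mul_eq_zero.mp h' with h'' | h''
        · exact Or.inl (by linear_combination h'')
        · exact Or.inr (Or.inl (by linear_combination h''))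
      · exact Or.inr (Or.inr (by linear_combination h'))
    · rintro (rfl | rfl | rfl)
      · rfl
      · linear_combination c ^ 3 * hζ3
      · linear_combination (ζ ^ 3 * c ^ 3 + c ^ 3) * hζ3
  -- square roots
  have hsqrt : ∀ y d : ZMod p, y ^ 2 = d ^ 2 → (y = d ∨ y = -d) := by
    intro y d h
    have hfac : (y - d) * (y + d) = 0 := by linear_combination h
    rcases mul_eq_zero.mp hfac with h' | h'
    · exact Or.inl (by linear_combination h')
    · exact Or.inr (by linear_combination h')
  -- triple cardinality
  have htriple : ∀ c : ZMod p, c ≠ 0 → ({c, ζ * c, ζ ^ 2 * c} : Finset (ZMod p)).card = 3 := by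
    intro c hc
    have hne1 : c ≠ ζ * c := by
      intro h
      have : (ζ - 1) * c = 0 := by linear_combination -h
      rcases mul_eq_zero.mp this with h' | h'
      · exact hζ1 (by linear_combination h')
      · exact hc h'
    have hne2 : c ≠ ζ ^ 2 * c := by
      intro h
      have : (ζ ^ 2 - 1) * c = 0 := by linear_combination -h
      rcases mul_eq_zero.mp this with h' | h'
      · exact hζ2 (by linear_combination h')
      · exact hc h'
    have hne3 : ζ * c ≠ ζ ^ 2 * c := by
      intro h
      have : ζ * ((ζ - 1) * c) = 0 := by linear_combination -h
      rcases mul_eq_zero.mp this with h' | h'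
      · exact hζ0 h'
      · rcases mul_eq_zero.mp h' with h'' | h''
        · exact hζ1 (by linear_combination h'')
        · exact hc h''
    rw [Finset.card_insert_of_notMem (by simp [hne1, hne2]),
      Finset.card_insert_of_notMem (by simp [hne3]), Finset.card_singleton]
  set S := Finset.univ.filter (fun P : ZMod p × ZMod p => P.2 ^ 2 = P.1 ^ 3 + a ^ 3) with hSdef
  -- card of y = 0 part : 3
  have hA : (S.filter (fun P => P.2 = 0)).card = 3 := by
    have hset : S.filter (fun P => P.2 = 0)
        = ({-a, ζ * (-a), ζ ^ 2 * (-a)} : Finset (ZMod p)) ×ˢ ({0} : Finset (ZMod p)) := by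
      ext ⟨x, y⟩
      simp only [hSdef, Finset.mem_filter, Finset.mem_univ, true_and, Finset.mem_product,
        Finset.mem_insert, Finset.mem_singleton]
      constructor
      · rintro ⟨h1, rfl⟩
        exact ⟨(hcube x (-a)).mp (by linear_combination -h1), rfl⟩
      · rintro ⟨hx, rfl⟩
        have := (hcube x (-a)).mpr hx
        exact ⟨by linear_combination -this, rfl⟩
    rw [hset, Finset.card_product, htriple (-a) (neg_ne_zero.mpr ha), Finset.card_singleton]
  -- card of y ≠ 0 part : even
  have hB : 2 ∣ (S.filter (fun P => ¬P.2 = 0)).card := by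
    rw [Finset.card_eq_sum_card_fiberwise
      (f := fun P : ZMod p × ZMod p => P.1) (t := Finset.univ) (fun x _ => Finset.mem_univ _)]
    refine Finset.dvd_sum fun x _ => ?_
    rcases Finset.eq_empty_or_nonempty
        ((S.filter (fun P => ¬P.2 = 0)).filter (fun P => P.1 = x)) with he | ⟨⟨u, v⟩, hm⟩
    · rw [he, Finset.card_empty]; exact dvd_zero 2
    · simp only [hSdef, Finset.mem_filter, Finset.mem_univ, true_and] at hm
      obtain ⟨⟨hv2, hv0⟩, hu⟩ := hm
      subst hu
      have hfib : (S.filter (fun P => ¬P.2 = 0)).filter (fun P : ZMod p × ZMod p => P.1 = u)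
          = {(u, v), (u, -v)} := by
        ext ⟨w, z⟩
        simp only [hSdef, Finset.mem_filter, Finset.mem_univ, true_and, Finset.mem_insert,
          Finset.mem_singleton, Prod.mk.injEq]
        constructor
        · rintro ⟨⟨hz2, hz0⟩, rfl⟩
          have hzz : z ^ 2 = v ^ 2 := by rw [hz2, hv2]
          rcases hsqrt z v hzz with rfl | rfl
          · exact Or.inl ⟨rfl, rfl⟩
          · exact Or.inr ⟨rfl, rfl⟩
        · rintro (⟨rfl, rfl⟩ | ⟨rfl, rfl⟩)
          · exact ⟨⟨hv2, hv0⟩, rfl⟩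
          · exact ⟨⟨by linear_combination hv2, fun h => hv0 (by linear_combination -h)⟩, rfl⟩
      rw [hfib, Finset.card_pair]
      intro h
      have hvv : v = -v := congrArg Prod.snd h
      have : (2 : ZMod p) * v = 0 := by linear_combination hvv
      rcases mul_eq_zero.mp this with h' | h'
      · exact h2 h'
      · exact hv0 h'
  -- card of x = 0 part : 2
  have hC : (S.filter (fun P => P.1 = 0)).card = 2 := by
    obtain ⟨c, hc⟩ := hsq
    have hc0 : c ≠ 0 := fun h => ha (by rw [hc, h, mul_zero])
    have hc30 : c ^ 3 ≠ 0 := pow_ne_zero 3 hc0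
    have hset : S.filter (fun P => P.1 = 0) = {((0 : ZMod p), c ^ 3), (0, -(c ^ 3))} := by
      ext ⟨x, y⟩
      simp only [hSdef, Finset.mem_filter, Finset.mem_univ, true_and, Finset.mem_insert,
        Finset.mem_singleton, Prod.mk.injEq]
      constructor
      · rintro ⟨hy, rfl⟩
        have hyy : y ^ 2 = (c ^ 3) ^ 2 := by rw [hy, hc]; ring
        rcases hsqrt y (c ^ 3) hyy with rfl | rfl
        · exact Or.inl ⟨rfl, rfl⟩
        · exact Or.inr ⟨rfl, rfl⟩
      · rintro (⟨rfl, rfl⟩ | ⟨rfl, rfl⟩) <;> exact ⟨by rw [hc]; ring, rfl⟩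
    rw [hset, Finset.card_pair]
    intro h
    have hvv : c ^ 3 = -(c ^ 3) := congrArg Prod.snd h
    have : (2 : ZMod p) * c ^ 3 = 0 := by linear_combination hvv
    rcases mul_eq_zero.mp this with h' | h'
    · exact h2 h'
    · exact hc30 h'
  -- card of x ≠ 0 part : divisible by 3
  have hD : 3 ∣ (S.filter (fun P => ¬P.1 = 0)).card := by
    rw [Finset.card_eq_sum_card_fiberwise
      (f := fun P : ZMod p × ZMod p => P.1 ^ 3) (t := Finset.univ) (fun x _ => Finset.mem_univ _)]
    refine Finset.dvd_sum fun t _ => ?_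
    rcases Finset.eq_empty_or_nonempty
        ((S.filter (fun P => ¬P.1 = 0)).filter (fun P => P.1 ^ 3 = t)) with he | ⟨⟨u, v⟩, hm⟩
    · rw [he, Finset.card_empty]; exact dvd_zero 3
    · simp only [hSdef, Finset.mem_filter, Finset.mem_univ, true_and] at hm
      obtain ⟨⟨hv2, hu0⟩, hut⟩ := hm
      subst hut
      have hfib : (S.filter (fun P => ¬P.1 = 0)).filter (fun P : ZMod p × ZMod p => P.1 ^ 3 = u ^ 3)
          = ({u, ζ * u, ζ ^ 2 * u} : Finset (ZMod p))
              ×ˢ (Finset.univ.filter fun y => y ^ 2 = u ^ 3 + a ^ 3) := by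
        ext ⟨w, z⟩
        simp only [hSdef, Finset.mem_filter, Finset.mem_univ, true_and, Finset.mem_product,
          Finset.mem_insert, Finset.mem_singleton]
        constructor
        · rintro ⟨⟨hz2, hw0⟩, hw3⟩
          exact ⟨(hcube w u).mp hw3, by rw [← hw3]; exact hz2⟩
        · rintro ⟨hw, hz⟩
          have hw3 : w ^ 3 = u ^ 3 := (hcube w u).mpr hw
          refine ⟨⟨by rw [hw3]; exact hz, ?_⟩, hw3⟩
          intro h
          apply hu0
          have : u ^ 3 = 0 := by rw [← hw3, h]; ring
          exact pow_eq_zero_iff (by norm_num) |>.mp this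
      rw [hfib, Finset.card_product, htriple u hu0]
      exact dvd_mul_right 3 _
  -- combine
  have hsplit2 := Finset.card_filter_add_card_filter_not
    (s := S) (p := fun P : ZMod p × ZMod p => P.2 = 0)
  have hsplit3 := Finset.card_filter_add_card_filter_not
    (s := S) (p := fun P : ZMod p × ZMod p => P.1 = 0)
  have hS6 : S.card % 6 = 5 := by omega
  have hbc : bachetCount p a = S.card + 1 := rfl
  rw [hbc]
  show _ % (6 : ℤ) = _ % (6 : ℤ)
  omega
end

section
/- Let p ≡ 1 (mod 6) be a prime and a ∈ F_p*. Then a is a quadratic residue modulo p if and only if the group E(F_p) of points on y² = x³ + a³ has an element of order 3 (equivalently, 3 divides the order of E(F_p)). -/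
/-- The Bachet curve `y² = x³ + a³` as a Weierstrass curve over `F_p`. -/
def bachetCurve (p : ℕ) [Fact p.Prime] (a : ZMod p) : WeierstrassCurve.Affine (ZMod p) :=
  { a₁ := 0, a₂ := 0, a₃ := 0, a₄ := 0, a₆ := a ^ 3 }

open WeierstrassCurve.Affine WeierstrassCurve.Affine.Point

theorem IsPrimitiveRoot.isSquare_neg_three {R : Type*} [CommRing R] [IsDomain R] {ζ : R}
    (hζ : IsPrimitiveRoot ζ 3) : IsSquare (-3 : R) := by
  have hsum : 1 + ζ + ζ ^ 2 = 0 := by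
    simpa [Finset.sum_range_succ] using hζ.geom_sum_eq_zero (by norm_num)
  exact ⟨2 * ζ + 1, by linear_combination -4 * hsum⟩

theorem FiniteField.isSquare_neg_three_of_three_dvd {F : Type*} [Field F] [Fintype F]
    (h : 3 ∣ Fintype.card F - 1) : IsSquare (-3 : F) := by
  classical
  have : Fact (Nat.Prime 3) := ⟨Nat.prime_three⟩
  obtain ⟨g, hg⟩ := exists_prime_orderOf_dvd_card (G := Fˣ) 3 (by rwa [Fintype.card_units])
  rw [← orderOf_units] at hg
  exact (hg ▸ IsPrimitiveRoot.orderOf (g : F)).isSquare_neg_three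

theorem self_eq_neg_iff_of_two_ne_zero {R : Type*} [Ring R] [NoZeroDivisors R]
    (h2 : (2 : R) ≠ 0) {a : R} : a = -a ↔ a = 0 := by
  rw [eq_neg_iff_add_eq_zero, ← two_mul, mul_eq_zero, or_iff_right h2]

theorem addOrderOf_eq_three_iff {G : Type*} [AddGroup G] {P : G} :
    addOrderOf P = 3 ↔ P ≠ 0 ∧ P + P = -P := by
  have : Fact (Nat.Prime 3) := ⟨Nat.prime_three⟩
  rw [addOrderOf_eq_prime_iff, succ_nsmul, two_nsmul, ← eq_neg_iff_add_eq_zero, and_comm]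

namespace WeierstrassCurve.Affine.Point

variable {F : Type*} [Field F] [DecidableEq F] {W : WeierstrassCurve.Affine F}

theorem some_add_self_eq_neg_iff {x y : F} (h : W.Nonsingular x y) :
    some _ _ h + some _ _ h = -some _ _ h ↔ y ≠ W.negY x y ∧ W.addX x x (W.slope x x y y) = x := by
  by_cases hy : y = W.negY x y
  · rw [add_self_of_Y_eq hy, eq_comm, neg_eq_zero]
    exact iff_of_false (some_ne_zero h) (fun h' ↦ h'.1 hy)
  · rw [add_self_of_Y_ne hy, neg_some, some.injEq]
    refine ⟨fun hP ↦ ⟨hy, hP.1⟩, fun ⟨_, hx⟩ ↦ ⟨hx, ?_⟩⟩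
    rw [addY, negAddY, hx, sub_self, mul_zero, zero_add]

end WeierstrassCurve.Affine.Point

def mordellCurve {R : Type*} [CommRing R] (c : R) : WeierstrassCurve.Affine R :=
  { a₁ := 0, a₂ := 0, a₃ := 0, a₄ := 0, a₆ := c }

namespace mordellCurve

section CommRing

variable {R : Type*} [CommRing R] {c x y : R}

@[simp]
theorem negY_eq : (mordellCurve c).negY x y = -y := by
  simp [WeierstrassCurve.Affine.negY, mordellCurve]

theorem equation_iff : (mordellCurve c).Equation x y ↔ y ^ 2 = x ^ 3 + c := by
  simp [WeierstrassCurve.Affine.equation_iff, mordellCurve]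

end CommRing

variable {F : Type*} [Field F] {c x y : F}

theorem nonsingular (h2 : (2 : F) ≠ 0) (h : y ^ 2 = x ^ 3 + c) (hy : y ≠ 0) :
    (mordellCurve c).Nonsingular x y := by
  refine (nonsingular_iff' ..).mpr ⟨equation_iff.mpr h, Or.inr ?_⟩
  simpa [mordellCurve] using mul_ne_zero h2 hy

theorem addX_slope_sub [DecidableEq F] (h2 : (2 : F) ≠ 0) (h : y ^ 2 = x ^ 3 + c) (hy : y ≠ 0) :
    (mordellCurve c).addX x x ((mordellCurve c).slope x x y y) - x =
      -3 * (x * (x ^ 3 + 4 * c)) / (2 * y) ^ 2 := by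
  have hy' : y ≠ (mordellCurve c).negY x y := by
    rwa [negY_eq, ne_eq, self_eq_neg_iff_of_two_ne_zero h2]
  rw [slope_of_Y_ne rfl hy', negY_eq, sub_neg_eq_add, ← two_mul]
  simp only [addX, mordellCurve, mul_zero, zero_mul, add_zero, sub_zero]
  field_simp
  linear_combination (-12 * x) * h

theorem addOrderOf_some_eq_three_iff [DecidableEq F] (h2 : (2 : F) ≠ 0) (h3 : (3 : F) ≠ 0)
    (h : (mordellCurve c).Nonsingular x y) :
    addOrderOf (some _ _ h) = 3 ↔ y ≠ 0 ∧ x * (x ^ 3 + 4 * c) = 0 := by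
  rw [addOrderOf_eq_three_iff, and_iff_right (some_ne_zero h), some_add_self_eq_neg_iff, negY_eq,
    ne_eq, self_eq_neg_iff_of_two_ne_zero h2]
  refine and_congr_right fun hy ↦ ?_
  rw [← sub_eq_zero, addX_slope_sub h2 (equation_iff.mp h.1) hy]
  simp [h2, h3, hy]

theorem exists_addOrderOf_eq_three_iff_isSquare [DecidableEq F] (h2 : (2 : F) ≠ 0) (h3 : (3 : F) ≠ 0)
    (hneg3 : IsSquare (-3 : F)) {a : F} (ha : a ≠ 0) :
    (∃ P : (mordellCurve (a ^ 3)).Point, addOrderOf P = 3) ↔ IsSquare a := by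
  constructor
  · rintro ⟨_ | ⟨x, y, h⟩, hP⟩
    · rw [← zero_def, addOrderOf_zero] at hP
      norm_num at hP
    · obtain ⟨-, hx⟩ := (addOrderOf_some_eq_three_iff h2 h3 h).mp hP
      have hE := equation_iff.mp h.1
      rcases mul_eq_zero.mp hx with rfl | hx
      · exact ⟨y / a, by field_simp; linear_combination -hE⟩
      · obtain ⟨s, hs⟩ := hneg3
        have : s ≠ 0 := by rintro rfl; exact h3 (by linear_combination -hs)
        exact ⟨y / (s * a), by field_simp; linear_combination -hE - hx - a ^ 3 * hs⟩
  · rintro ⟨s, rfl⟩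
    have hs : s ^ 3 ≠ 0 := pow_ne_zero 3 (left_ne_zero_of_mul ha)
    have hE : (s ^ 3) ^ 2 = 0 ^ 3 + (s * s) ^ 3 := by ring
    exact ⟨some _ _ (nonsingular h2 hE hs), (addOrderOf_some_eq_three_iff h2 h3 _).mpr ⟨hs, by ring⟩⟩

end mordellCurve

theorem stmt_15 (p : ℕ) [Fact p.Prime] (hp : p % 6 = 1) (a : ZMod p) (ha : a ≠ 0) :
    IsSquare a ↔ ∃ P : (bachetCurve p a).Point, addOrderOf P = 3 := by
  have hp7 : 7 ≤ p := by have := (Fact.out : p.Prime).two_le; omega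
  have hne {n : ℕ} (h0 : 0 < n) (hn : n < p) : (n : ZMod p) ≠ 0 := by
    rw [ne_eq, ZMod.natCast_eq_zero_iff]
    exact Nat.not_dvd_of_pos_of_lt h0 hn
  have hneg3 : IsSquare (-3 : ZMod p) :=
    FiniteField.isSquare_neg_three_of_three_dvd (by rw [ZMod.card]; omega)
  have h2 : (2 : ZMod p) ≠ 0 := by exact_mod_cast hne (n := 2) (by norm_num) (by omega)
  have h3 : (3 : ZMod p) ≠ 0 := by exact_mod_cast hne (n := 3) (by norm_num) (by omega)
  -- `bachetCurve p a` is `mordellCurve (a ^ 3)` by definition.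
  exact (mordellCurve.exists_addOrderOf_eq_three_iff_isSquare h2 h3 hneg3 ha).symm
end
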